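/- For any Ω-category A over a commutative unital quantale, the presheaf Ω-category [Aᵒᵖ, Ω] is completely distributive: the supremum Ω-functor sup : [[Aᵒᵖ,Ω]ᵒᵖ, Ω] → [Aᵒᵖ,Ω], which satisfies sup Φ = Φ ∘ y_A (precomposition with the Yoneda embedding), has a left adjoint. -/
import Mathlib


/-- A commutative unital quantale: a complete lattice with a commutative
monoid structure whose multiplication distributes over arbitrary joins. -/
class CommQuantale (Q : Type*) extends CompleteLattice Q, CommMonoid Q where
  mul_sSup : ∀ (a : Q) (s : Set Q), a * sSup s = ⨆ b ∈ s, a * b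

/-- The residuation `a → b = ⋁ {c | a * c ≤ b}`. -/
def qres {Q : Type*} [CommQuantale Q] (a b : Q) : Q := sSup {c | a * c ≤ b}

section Aux
variable {Q : Type*} [CommQuantale Q]

lemma cq_mul_iSup (a : Q) {ι : Sort*} (f : ι → Q) : a * (⨆ i, f i) = ⨆ i, a * f i := by
  rw [iSup, CommQuantale.mul_sSup, iSup_range]

lemma cq_mul_le_mul_left (a : Q) {c d : Q} (h : c ≤ d) : a * c ≤ a * d := by
  have : a * sSup {c, d} = ⨆ b ∈ ({c, d} : Set Q), a * b := CommQuantale.mul_sSup a _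
  have h2 : sSup ({c, d} : Set Q) = d := by
    rw [sSup_pair]; exact sup_eq_right.mpr h
  rw [h2] at this
  rw [this]
  exact le_iSup₂ (f := fun b _ => a * b) c (by simp)

lemma cq_mul_le_mul {a b c d : Q} (h1 : a ≤ b) (h2 : c ≤ d) : a * c ≤ b * d := by
  calc a * c ≤ a * d := cq_mul_le_mul_left a h2
    _ = d * a := mul_comm _ _
    _ ≤ d * b := cq_mul_le_mul_left d h1
    _ = b * d := mul_comm _ _

lemma qres_gc (a : Q) : GaloisConnection (fun c => a * c) (qres a) := by
  intro c b
  constructor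
  · intro h; exact le_sSup h
  · intro h
    calc a * c ≤ a * qres a b := cq_mul_le_mul_left a h
      _ = ⨆ x ∈ {c | a * c ≤ b}, a * x := CommQuantale.mul_sSup a _
      _ ≤ b := by exact iSup₂_le fun x hx => hx

lemma le_qres_iff {a b c : Q} : c ≤ qres a b ↔ a * c ≤ b := (qres_gc a c b).symm

lemma mul_qres_le (a b : Q) : a * qres a b ≤ b := le_qres_iff.mp le_rfl

lemma qres_one_left (b : Q) : qres 1 b = b :=
  le_antisymm (by simpa using mul_qres_le 1 b) (le_qres_iff.mpr (by simp))

lemma one_le_qres_self (a : Q) : 1 ≤ qres a a := le_qres_iff.mpr (by simp)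

lemma qres_mono_right (a : Q) {b b' : Q} (h : b ≤ b') : qres a b ≤ qres a b' :=
  (qres_gc a).monotone_u h

lemma qres_anti_left {a a' : Q} (h : a ≤ a') (b : Q) : qres a' b ≤ qres a b :=
  le_qres_iff.mpr (le_trans (cq_mul_le_mul h le_rfl) (mul_qres_le a' b))

lemma qres_iInf_right (a : Q) {ι : Sort*} (f : ι → Q) :
    qres a (⨅ i, f i) = ⨅ i, qres a (f i) := (qres_gc a).u_iInf

lemma qres_iSup_left {ι : Sort*} (f : ι → Q) (c : Q) :
    qres (⨆ i, f i) c = ⨅ i, qres (f i) c := by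
  apply le_antisymm
  · exact le_iInf fun i => qres_anti_left (le_iSup f i) c
  · rw [le_qres_iff, mul_comm, cq_mul_iSup]
    exact iSup_le fun i => by
      rw [mul_comm]
      exact le_trans (cq_mul_le_mul_left _ (iInf_le _ i)) (mul_qres_le _ _)

lemma qres_mul (a b c : Q) : qres (a * b) c = qres a (qres b c) := by
  apply le_antisymm <;> rw [le_qres_iff]
  · rw [le_qres_iff, ← mul_assoc, mul_comm b a]
    exact mul_qres_le _ _
  · calc a * b * qres a (qres b c)
        = b * (a * qres a (qres b c)) := by rw [mul_comm a b, mul_assoc]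
      _ ≤ b * qres b c := cq_mul_le_mul_left b (mul_qres_le _ _)
      _ ≤ c := mul_qres_le _ _

lemma qres_comp (a b c : Q) : qres a b * qres b c ≤ qres a c := by
  rw [le_qres_iff, ← mul_assoc]
  exact le_trans (cq_mul_le_mul (mul_qres_le a b) le_rfl) (mul_qres_le b c)

end Aux

/-- For any Ω-category A, the presheaf Ω-category [Aᵒᵖ, Ω] is completely
distributive: the supremum functor sup : [[Aᵒᵖ,Ω]ᵒᵖ, Ω] → [Aᵒᵖ,Ω], given by
sup Φ = Φ ∘ y_A, has a left adjoint. -/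
theorem presheaf_category_completely_distributive {Q : Type*} [CommQuantale Q]
    {A : Type*} (hom : A → A → Q)
    (hrefl : ∀ a : A, (1 : Q) ≤ hom a a)
    (htrans : ∀ a b c : A, hom a b * hom b c ≤ hom a c)
    -- lower Ω-subsets, i.e. objects of [Aᵒᵖ, Ω]
    (IsLow : (A → Q) → Prop)
    (hIsLow : ∀ φ : A → Q, IsLow φ ↔ ∀ a b : A, hom b a ≤ qres (φ a) (φ b))
    -- Ω-functors [Aᵒᵖ,Ω]ᵒᵖ → Ω
    (IsFun : ((A → Q) → Q) → Prop)
    (hIsFun : ∀ Φ : (A → Q) → Q, IsFun Φ ↔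
      ∀ φ ψ : A → Q, IsLow φ → IsLow ψ →
        (⨅ x : A, qres (ψ x) (φ x)) ≤ qres (Φ φ) (Φ ψ)) :
    ∃ D : (A → Q) → ((A → Q) → Q),
      -- D sends objects of [Aᵒᵖ,Ω] to objects of [[Aᵒᵖ,Ω]ᵒᵖ, Ω]
      (∀ φ : A → Q, IsLow φ → IsFun (D φ)) ∧
      -- D is an Ω-functor
      (∀ φ φ' : A → Q, IsLow φ → IsLow φ' →
        (⨅ x : A, qres (φ x) (φ' x)) ≤
          ⨅ ψ : {ψ : A → Q // IsLow ψ}, qres (D φ ψ.1) (D φ' ψ.1)) ∧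
      -- D is left adjoint to sup, where sup Φ = Φ ∘ y_A
      (∀ φ : A → Q, IsLow φ → ∀ Φ : (A → Q) → Q, IsFun Φ →
        (⨅ ψ : {ψ : A → Q // IsLow ψ}, qres (D φ ψ.1) (Φ ψ.1)) =
          ⨅ x : A, qres (φ x) (Φ (fun z => hom z x))) := by
  -- hom of the presheaf category
  set B : (A → Q) → (A → Q) → Q := fun φ ψ => ⨅ x, qres (φ x) (ψ x) with hB
  -- Yoneda embedding
  set y : A → (A → Q) := fun x => fun z => hom z x with hy
  have hyLow : ∀ x : A, IsLow (y x) := by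
    intro x
    rw [hIsLow]
    intro a b
    rw [le_qres_iff]
    calc hom a x * hom b a = hom b a * hom a x := mul_comm _ _
      _ ≤ hom b x := htrans b a x
  have hBcomp : ∀ φ ψ χ : A → Q, B φ ψ * B ψ χ ≤ B φ χ := by
    intro φ ψ χ
    refine le_iInf fun x => ?_
    exact le_trans (cq_mul_le_mul (iInf_le _ x) (iInf_le _ x)) (qres_comp _ _ _)
  refine ⟨fun φ ψ => ⨆ x, φ x * B ψ (y x), ?_, ?_, ?_⟩
  · -- IsFun (D φ)
    intro φ _
    rw [hIsFun]
    intro ψ' ψ _ _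
    rw [le_qres_iff, mul_comm, cq_mul_iSup]
    refine iSup_le fun x => ?_
    refine le_trans ?_ (le_iSup (fun x => φ x * B ψ (y x)) x)
    calc (⨅ x', qres (ψ x') (ψ' x')) * (φ x * B ψ' (y x))
        = φ x * (B ψ ψ' * B ψ' (y x)) := by rw [hB]; exact mul_left_comm _ _ _
      _ ≤ φ x * B ψ (y x) := cq_mul_le_mul_left _ (hBcomp ψ ψ' (y x))
  · -- D is an Ω-functor
    intro φ φ' _ _
    refine le_iInf fun ψ => ?_
    rw [le_qres_iff, mul_comm, cq_mul_iSup]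
    refine iSup_le fun x => ?_
    refine le_trans ?_ (le_iSup (fun x => φ' x * B ψ.1 (y x)) x)
    calc (⨅ x', qres (φ x') (φ' x')) * (φ x * B ψ.1 (y x))
        = ((⨅ x', qres (φ x') (φ' x')) * φ x) * B ψ.1 (y x) := (mul_assoc _ _ _).symm
      _ ≤ φ' x * B ψ.1 (y x) := by
          refine cq_mul_le_mul ?_ le_rfl
          rw [mul_comm, ← le_qres_iff]
          exact iInf_le _ x
  · -- adjunction
    intro φ _ Φ hΦ
    have key : ∀ x : A, (⨅ ψ : {ψ : A → Q // IsLow ψ}, qres (B ψ.1 (y x)) (Φ ψ.1)) = Φ (y x) := by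
      intro x
      apply le_antisymm
      · refine le_trans (iInf_le _ ⟨y x, hyLow x⟩) ?_
        refine le_trans (qres_anti_left ?_ _) (le_of_eq (qres_one_left _))
        refine le_iInf fun a => one_le_qres_self _
      · refine le_iInf fun ψ => ?_
        rw [le_qres_iff, mul_comm, ← le_qres_iff]
        exact (hIsFun Φ).mp hΦ (y x) ψ.1 (hyLow x) ψ.2
    calc (⨅ ψ : {ψ : A → Q // IsLow ψ}, qres (⨆ x, φ x * B ψ.1 (y x)) (Φ ψ.1))
        = ⨅ ψ : {ψ : A → Q // IsLow ψ}, ⨅ x, qres (φ x) (qres (B ψ.1 (y x)) (Φ ψ.1)) := by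
          refine iInf_congr fun ψ => ?_
          rw [qres_iSup_left]
          exact iInf_congr fun x => qres_mul _ _ _
      _ = ⨅ x, ⨅ ψ : {ψ : A → Q // IsLow ψ}, qres (φ x) (qres (B ψ.1 (y x)) (Φ ψ.1)) :=
          iInf_comm
      _ = ⨅ x, qres (φ x) (⨅ ψ : {ψ : A → Q // IsLow ψ}, qres (B ψ.1 (y x)) (Φ ψ.1)) := by
          exact iInf_congr fun x => (qres_iInf_right _ _).symm
      _ = ⨅ x, qres (φ x) (Φ (y x)) := iInf_congr fun x => by rw [key x]
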